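/- Let P ≥ 2 and R ≥ 1 be real, and let n be a natural number. If the largest P-smooth divisor of n is greater than R, then n has a P-smooth divisor d with R < d ≤ RP. -/
import Mathlib


open scoped Classical

/-- The largest `P`-smooth divisor of `n`: the product of the prime powers `p^{v_p(n)}`
over the primes `p ≤ P` dividing `n`. -/
noncomputable def smoothPart (P : ℝ) (n : ℕ) : ℕ :=
  ∏ p ∈ n.primeFactors.filter (fun p : ℕ => (p : ℝ) ≤ P), p ^ n.factorization p

/-- If the largest `P`-smooth divisor of `n` is greater than `R`, then `n` has a
`P`-smooth divisor `d` with `R < d ≤ RP`. -/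
theorem statement_16 (P R : ℝ) (hP : 2 ≤ P) (hR : 1 ≤ R) (n : ℕ)
    (h : R < smoothPart P n) :
    ∃ d : ℕ, d ∣ n ∧ (∀ p ∈ d.primeFactors, (p : ℝ) ≤ P) ∧ R < d ∧ (d : ℝ) ≤ R * P := by
  have hn : n ≠ 0 := by
    rintro rfl
    simp [smoothPart] at h
    linarith
  -- smoothPart divides n
  have hdvd : smoothPart P n ∣ n := by
    have h1 := Finset.prod_dvd_prod_of_subset (n.primeFactors.filter (fun p : ℕ => (p : ℝ) ≤ P))
      n.primeFactors (fun p => p ^ n.factorization p) (Finset.filter_subset _ _)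
    have h2 : ∏ p ∈ n.primeFactors, p ^ n.factorization p = n := by
      rw [← Nat.prod_factorization_eq_prod_primeFactors (fun p k => p ^ k)]
      exact Nat.factorization_prod_pow_eq_self hn
    rwa [h2] at h1
  -- smoothPart is smooth
  have hsm : ∀ p ∈ (smoothPart P n).primeFactors, (p : ℝ) ≤ P := by
    intro q hq
    obtain ⟨hqp, hqd, -⟩ := Nat.mem_primeFactors.mp hq
    obtain ⟨p, hp, hdvd'⟩ := hqp.prime.exists_mem_finset_dvd hqd
    obtain ⟨hpmem, hpP⟩ := Finset.mem_filter.mp hp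
    have : q = p := by
      have := (Nat.prime_dvd_prime_iff_eq hqp (Nat.prime_of_mem_primeFactors hpmem)).mp
        (hqp.dvd_of_dvd_pow hdvd')
      exact this
    rwa [this]
  -- the set of smooth divisors exceeding R is nonempty
  have hex : ∃ d : ℕ, d ∣ n ∧ (∀ p ∈ d.primeFactors, (p : ℝ) ≤ P) ∧ R < d :=
    ⟨smoothPart P n, hdvd, hsm, h⟩
  set d := Nat.find hex with hd
  obtain ⟨hd1, hd2, hd3⟩ := Nat.find_spec hex
  have hd2' : 2 ≤ d := by
    have : (1 : ℝ) < d := lt_of_le_of_lt hR hd3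
    exact_mod_cast this
  have hdpos : 0 < d := by omega
  set p := d.minFac with hpdef
  have hpprime : p.Prime := Nat.minFac_prime (by omega)
  have hpd : p ∣ d := Nat.minFac_dvd d
  have hpP : (p : ℝ) ≤ P := hd2 p (Nat.mem_primeFactors.mpr ⟨hpprime, hpd, by omega⟩)
  set d' := d / p with hd'
  have hdd : d = p * d' := (Nat.mul_div_cancel' hpd).symm
  have hd'd : d' ∣ d := ⟨p, by rw [hdd]; ring⟩
  have hd'dvd : d' ∣ n := hd'd.trans hd1
  have hd'sm : ∀ q ∈ d'.primeFactors, (q : ℝ) ≤ P := by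
    intro q hq
    exact hd2 q (Nat.primeFactors_mono hd'd (by omega) hq)
  have hd'lt : d' < d := Nat.div_lt_self hdpos hpprime.one_lt
  have hd'le : (d' : ℝ) ≤ R := by
    by_contra hc
    push_neg at hc
    exact absurd (Nat.find_min hex hd'lt ⟨hd'dvd, hd'sm, hc⟩) (by simp)
  refine ⟨d, hd1, hd2, hd3, ?_⟩
  have : (d : ℝ) = p * d' := by rw [hdd]; push_cast; ring
  rw [this]
  calc (p : ℝ) * d' ≤ P * R := by
        apply mul_le_mul hpP hd'le (by positivity) (by linarith)
    _ = R * P := by ring
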